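/- Let A be a finite set and P a real A×A matrix such that I − P_B is invertible for every B ⊆ A; write G_B = (I − P_B)⁻¹ and, for V = {x₁,…,x_k} ⊆ A with A_j = A \ {x₁,…,x_{j−1}}, F_V(A) = ∏_{j=1}^k G_{A_j}(x_j,x_j). Then F_V(A) = det(G_A)/det(G_{A\V}) = det(I − P_{A\V})/det(I − P_A) = det(G̃_V), where G̃_V is the k×k submatrix of G_A with rows and columns indexed by V. In particular F_A(A) = det(G_A) = 1/det(I − P_A). -/

import Mathlib

/-!
Jacobi's complementary-minor identity `det (M⁻¹)_V = det M_{Vᶜ} / det M` is the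
Schur-complement formula for the block decomposition of `M` along `V ⊕ Vᶜ`. For a singleton
`V = {a}` it is Cramer's rule `G_B(a,a) = det (I - P_{B \ a}) / det (I - P_B)`, so the product
defining `F_V(A)` telescopes to `det (I - P_{A \ V}) / det (I - P_A)`; Jacobi's identity for
`M = I - P` turns this into `det G̃_V`.
-/

open Matrix

/-- The principal submatrix of `P` with rows and columns indexed by the subset `B`. -/
def Matrix.restrictFinset {A : Type*} (P : Matrix A A ℝ) (B : Finset A) :
    Matrix {a // a ∈ B} {a // a ∈ B} ℝ :=
  P.submatrix (fun i => (i : A)) fun j => (j : A)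

/-- The diagonal entry `G_B(a,a)` of the Green's function `G_B = (I − P_B)⁻¹`
(by convention `0` if `a ∉ B`). -/
noncomputable def greenDiag {A : Type*} [Fintype A] [DecidableEq A]
    (P : Matrix A A ℝ) (B : Finset A) (a : A) : ℝ :=
  if h : a ∈ B then (1 - P.restrictFinset B)⁻¹ ⟨a, h⟩ ⟨a, h⟩ else 0

/-- For an ordering `x : Fin k → A` of distinct points, `A_j = A \ {x_1,…,x_{j−1}}`. -/
def avoid {A : Type*} [Fintype A] [DecidableEq A] {k : ℕ} (x : Fin k → A) (j : Fin k) :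
    Finset A :=
  Finset.univ \ Finset.image x (Finset.univ.filter fun i => i < j)

/-- `F_V(A) = ∏_{j=1}^k G_{A_j}(x_j,x_j)` for `V = {x₁,…,x_k}`. -/
noncomputable def Ffun {A : Type*} [Fintype A] [DecidableEq A] {k : ℕ}
    (P : Matrix A A ℝ) (x : Fin k → A) : ℝ :=
  ∏ j : Fin k, greenDiag P (avoid x j) (x j)

open Finset

theorem Matrix.det_submatrix_inv_inl {K α β γ : Type*} [Field K] [Fintype α] [DecidableEq α]
    [Fintype β] [DecidableEq β] [Fintype γ] [DecidableEq γ]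
    (M : Matrix α α K) (e : β ⊕ γ ≃ α) (hM : IsUnit M)
    (hD : IsUnit (M.submatrix (e ∘ Sum.inr) (e ∘ Sum.inr))) :
    (M⁻¹.submatrix (e ∘ Sum.inl) (e ∘ Sum.inl)).det =
      (M.submatrix (e ∘ Sum.inr) (e ∘ Sum.inr)).det / M.det := by
  set A := M.submatrix (e ∘ Sum.inl) (e ∘ Sum.inl)
  set B := M.submatrix (e ∘ Sum.inl) (e ∘ Sum.inr)
  set C := M.submatrix (e ∘ Sum.inr) (e ∘ Sum.inl)
  set D := M.submatrix (e ∘ Sum.inr) (e ∘ Sum.inr)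
  have hblocks : M.submatrix e e = fromBlocks A B C D := by
    ext (i | i) (j | j) <;> rfl
  let _ : Invertible M := hM.invertible
  let _ : Invertible D := hD.invertible
  let _ : Invertible (fromBlocks A B C D) := hblocks ▸ M.submatrixEquivInvertible e e
  let _ : Invertible (A - B * ⅟D * C) := invertibleOfFromBlocks₂₂Invertible A B C D
  have htopLeft : M⁻¹.submatrix (e ∘ Sum.inl) (e ∘ Sum.inl) = ⅟(A - B * ⅟D * C) := by
    have h := congrArg toBlocks₁₁ (show M⁻¹.submatrix e e = ⅟(fromBlocks A B C D) by
      rw [← inv_submatrix_equiv, hblocks, invOf_eq_nonsing_inv])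
    rwa [invOf_fromBlocks₂₂_eq, toBlocks_fromBlocks₁₁] at h
  have hdet : M.det = D.det * (A - B * ⅟D * C).det := by
    rw [← det_submatrix_equiv_self e, hblocks, det_fromBlocks₂₂]
  have hD0 : D.det ≠ 0 := (isUnit_iff_isUnit_det D).mp hD |>.ne_zero
  rw [htopLeft, invOf_eq_nonsing_inv, det_nonsing_inv, Ring.inverse_eq_inv, hdet,
    div_mul_cancel_left₀ hD0]

def Finset.sumUnivSdiffEquiv {α : Type*} [Fintype α] [DecidableEq α] (V : Finset α) :
    V ⊕ ↥(univ \ V) ≃ α :=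
  (Equiv.sumCongr (Equiv.refl _) (Equiv.subtypeEquivRight (by simp))).trans
    (Equiv.sumCompl (· ∈ V))

theorem Matrix.det_restrictFinset_inv {α : Type*} [Fintype α] [DecidableEq α]
    (M : Matrix α α ℝ) (hM : IsUnit M) (V : Finset α)
    (hD : IsUnit (M.restrictFinset (univ \ V))) :
    (M⁻¹.restrictFinset V).det = (M.restrictFinset (univ \ V)).det / M.det :=
  M.det_submatrix_inv_inl V.sumUnivSdiffEquiv hM hD

theorem Matrix.det_restrictFinset_univ {α : Type*} [Fintype α] [DecidableEq α]
    (M : Matrix α α ℝ) : (M.restrictFinset univ).det = M.det :=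
  det_submatrix_equiv_self (Equiv.subtypeUnivEquiv mem_univ) M

theorem Matrix.restrictFinset_one_sub {α : Type*} [DecidableEq α] (P : Matrix α α ℝ)
    (B : Finset α) : (1 - P).restrictFinset B = 1 - P.restrictFinset B := by
  show (1 : Matrix α α ℝ).submatrix Subtype.val Subtype.val - P.restrictFinset B = _
  rw [submatrix_one _ Subtype.val_injective]

def Finset.sdiffSingletonEquivErase {α : Type*} [DecidableEq α] {B : Finset α} {a : α}
    (ha : a ∈ B) :
    ↥(univ \ {⟨a, ha⟩} : Finset B) ≃ B.erase a where
  toFun y := ⟨y.1.1, by simpa [Subtype.ext_iff] using y.2⟩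
  invFun c := ⟨⟨c.1, mem_of_mem_erase c.2⟩, by simp [Subtype.ext_iff, (mem_erase.mp c.2).1]⟩
  left_inv _ := rfl
  right_inv _ := rfl

theorem det_one_sub_restrictFinset_ne_zero {A : Type*} [DecidableEq A] (P : Matrix A A ℝ)
    (hinv : ∀ B : Finset A, IsUnit (1 - P.restrictFinset B)) (B : Finset A) :
    (1 - P.restrictFinset B).det ≠ 0 :=
  ((isUnit_iff_isUnit_det _).mp (hinv B)).ne_zero

theorem greenDiag_eq_det_div {A : Type*} [Fintype A] [DecidableEq A] (P : Matrix A A ℝ)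
    (hinv : ∀ B : Finset A, IsUnit (1 - P.restrictFinset B))
    {B : Finset A} {a : A} (ha : a ∈ B) :
    greenDiag P B a = (1 - P.restrictFinset (B.erase a)).det / (1 - P.restrictFinset B).det := by
  set M := (1 - P).restrictFinset B
  have hcompl : (M.restrictFinset (univ \ {⟨a, ha⟩})).det =
      (1 - P.restrictFinset (B.erase a)).det := by
    rw [← restrictFinset_one_sub, ← det_submatrix_equiv_self (sdiffSingletonEquivErase ha)]
    rfl
  have hM : IsUnit M := by simpa only [M, restrictFinset_one_sub] using hinv B
  have hD : IsUnit (M.restrictFinset (univ \ {⟨a, ha⟩})) := by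
    rw [isUnit_iff_isUnit_det, hcompl, ← isUnit_iff_isUnit_det]
    exact hinv _
  have hjac := det_restrictFinset_inv M hM {⟨a, ha⟩} hD
  rw [det_unique, hcompl] at hjac
  rw [greenDiag, dif_pos ha, ← restrictFinset_one_sub]
  exact hjac

theorem det_one_sub_restrictFinset_univ {A : Type*} [Fintype A] [DecidableEq A]
    (P : Matrix A A ℝ) : (1 - P.restrictFinset univ).det = (1 - P).det := by
  rw [← restrictFinset_one_sub, det_restrictFinset_univ]

theorem det_one_sub_ne_zero {A : Type*} [Fintype A] [DecidableEq A] (P : Matrix A A ℝ)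
    (hinv : ∀ B : Finset A, IsUnit (1 - P.restrictFinset B)) : (1 - P).det ≠ 0 :=
  det_one_sub_restrictFinset_univ P ▸ det_one_sub_restrictFinset_ne_zero P hinv univ

section Avoid

variable {A : Type*} [Fintype A] [DecidableEq A] {k : ℕ}

theorem avoid_eq_sdiff_image_Iio (x : Fin k → A) (j : Fin k) :
    avoid x j = univ \ (Iio j).image x := by
  rw [avoid, filter_gt_eq_Iio]

theorem avoid_castSucc (x : Fin (k + 1) → A) (j : Fin k) :
    avoid x j.castSucc = avoid (x ∘ Fin.castSucc) j := by
  rw [avoid_eq_sdiff_image_Iio, avoid_eq_sdiff_image_Iio, Fin.Iio_castSucc, map_eq_image,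
    image_image]
  rfl

theorem avoid_last (x : Fin (k + 1) → A) :
    avoid x (Fin.last k) = univ \ univ.image (x ∘ Fin.castSucc) := by
  rw [avoid_eq_sdiff_image_Iio, Fin.Iio_last_eq_map, map_eq_image, image_image]
  rfl

omit [Fintype A] in
theorem image_univ_fin_succ (x : Fin (k + 1) → A) :
    univ.image x = insert (x (Fin.last k)) (univ.image (x ∘ Fin.castSucc)) := by
  ext a
  simp [Fin.exists_fin_succ', or_comm, eq_comm]

theorem Ffun_succ (P : Matrix A A ℝ) (x : Fin (k + 1) → A) :
    Ffun P x = Ffun P (x ∘ Fin.castSucc) *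
      greenDiag P (univ \ univ.image (x ∘ Fin.castSucc)) (x (Fin.last k)) := by
  rw [Ffun, Fin.prod_univ_castSucc, avoid_last]
  simp only [avoid_castSucc]
  rfl

end Avoid

theorem Ffun_eq_det_div {A : Type*} [Fintype A] [DecidableEq A] (P : Matrix A A ℝ)
    (hinv : ∀ B : Finset A, IsUnit (1 - P.restrictFinset B)) {k : ℕ} (x : Fin k → A)
    (hx : Function.Injective x) :
    Ffun P x = (1 - P.restrictFinset (univ \ univ.image x)).det / (1 - P).det := by
  induction k with
  | zero =>
    rw [show univ.image x = ∅ by simp, sdiff_empty, det_one_sub_restrictFinset_univ,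
      div_self (det_one_sub_ne_zero P hinv)]
    rfl
  | succ k ih =>
    have hlast : x (Fin.last k) ∈ univ \ univ.image (x ∘ Fin.castSucc) := by
      simp [hx.eq_iff, Fin.castSucc_ne_last]
    rw [Ffun_succ, ih _ (hx.comp (Fin.castSucc_injective k)), greenDiag_eq_det_div P hinv hlast,
      ← sdiff_insert, ← image_univ_fin_succ]
    exact div_mul_div_cancel₀' (det_one_sub_restrictFinset_ne_zero P hinv _) _ _

theorem stmt_9_general {A : Type*} [Fintype A] [DecidableEq A] (P : Matrix A A ℝ)
    (hinv : ∀ B : Finset A, IsUnit (1 - P.restrictFinset B))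
    {k : ℕ} (x : Fin k → A) (hx : Function.Injective x)
    (V : Finset A) (hV : V = Finset.image x Finset.univ) :
    Ffun P x = ((1 - P)⁻¹).det / (1 - P.restrictFinset (Finset.univ \ V))⁻¹.det ∧
    Ffun P x = (1 - P.restrictFinset (Finset.univ \ V)).det / (1 - P).det ∧
    Ffun P x =
      (((1 - P)⁻¹).submatrix (fun i : {a // a ∈ V} => (i : A)) fun j : {a // a ∈ V} => (j : A)).det ∧
    (V = Finset.univ → Ffun P x = ((1 - P)⁻¹).det ∧ Ffun P x = 1 / (1 - P).det) := by
  subst hV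
  have hF := Ffun_eq_det_div P hinv x hx
  refine ⟨?_, hF, ?_, fun hV => ?_⟩
  · rw [det_nonsing_inv, det_nonsing_inv, Ring.inverse_eq_inv, Ring.inverse_eq_inv, inv_div_inv,
      hF]
  · have hunit : IsUnit (1 - P) :=
      (isUnit_iff_isUnit_det _).mpr (det_one_sub_ne_zero P hinv).isUnit
    rw [hF, ← restrictFinset_one_sub]
    refine (det_restrictFinset_inv (1 - P) hunit _ ?_).symm
    rw [restrictFinset_one_sub]
    exact hinv _
  · rw [hV, Finset.sdiff_self, det_isEmpty] at hF
    exact ⟨by rw [hF, det_nonsing_inv, Ring.inverse_eq_inv, one_div], hF⟩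

/-- With `I − P_B` invertible for all `B ⊆ A`, `G_B = (I − P_B)⁻¹`, and
`V = {x₁,…,x_k}` a set of distinct points of `A`:
`F_V(A) = det G_A / det G_{A\V} = det(I − P_{A\V}) / det(I − P_A) = det G̃_V`,
where `G̃_V` is the submatrix of `G_A` with rows and columns indexed by `V`.
In particular (when `V = A`) `F_A(A) = det G_A = 1 / det(I − P_A)`. -/
theorem stmt_9 {A : Type*} [Fintype A] [DecidableEq A] (P : Matrix A A ℝ)
    (hinv : ∀ B : Finset A, IsUnit (1 - P.restrictFinset B))
    (hfull : IsUnit (1 - P))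
    {k : ℕ} (x : Fin k → A) (hx : Function.Injective x)
    (V : Finset A) (hV : V = Finset.image x Finset.univ) :
    Ffun P x = ((1 - P)⁻¹).det / (1 - P.restrictFinset (Finset.univ \ V))⁻¹.det ∧
    Ffun P x = (1 - P.restrictFinset (Finset.univ \ V)).det / (1 - P).det ∧
    Ffun P x =
      (((1 - P)⁻¹).submatrix (fun i : {a // a ∈ V} => (i : A)) fun j : {a // a ∈ V} => (j : A)).det ∧
    (V = Finset.univ → Ffun P x = ((1 - P)⁻¹).det ∧ Ffun P x = 1 / (1 - P).det) :=
  stmt_9_general P hinv x hx V hV
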